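/- For every b > 0, the function g ↦ F(b,g) is continuous on [0,∞), convex on [0,∞), and monotone increasing on [0,∞). -/

import Mathlib

open Real Set

/-- The magnetic penalization function
`F(b,g) = πg² + (b²/(4π))·{2πg/b}·(1 − {2πg/b})`. -/
noncomputable def Fpen (b g : ℝ) : ℝ :=
  π * g ^ 2 + b ^ 2 / (4 * π) * Int.fract (2 * π * g / b) * (1 - Int.fract (2 * π * g / b))

/-!
After the substitution `s = 2πg/b`, `F(b, g) = b²/(4π) · (s² + {s}(1 - {s}))`, and
`s² + {s}(1 - {s})` is the piecewise linear interpolation of `s ↦ s²` at the integers.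
On `[n, n + 1]` it is the secant line `(2n + 1)s - n(n + 1)`, and every such secant line lies
below it. Being the supremum of its secant lines, it is convex; on `[0, ∞)` the slope
`2⌊s⌋ + 1` of the line through `s` is positive, so it is monotone there.
-/

theorem convexOn_of_forall_supporting_line {s : Set ℝ} {f : ℝ → ℝ} (hs : Convex ℝ s)
    (h : ∀ z ∈ s, ∃ a c : ℝ, (∀ x ∈ s, a * x + c ≤ f x) ∧ a * z + c = f z) :
    ConvexOn ℝ s f := by
  refine ⟨hs, fun x hx y hy t u ht hu htu => ?_⟩
  obtain ⟨a, c, hle, heq⟩ := h _ (hs hx hy ht hu htu)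
  rw [← heq]
  have hx' := mul_le_mul_of_nonneg_left (hle x hx) ht
  have hy' := mul_le_mul_of_nonneg_left (hle y hy) hu
  simp only [smul_eq_mul]
  linear_combination hx' + hy' - c * htu

noncomputable def sqInterp (s : ℝ) : ℝ := s ^ 2 + Int.fract s * (1 - Int.fract s)

def sqSecant (n : ℤ) (s : ℝ) : ℝ := (2 * n + 1) * s - n * (n + 1)

theorem sqInterp_sub_sqSecant (n : ℤ) (s : ℝ) :
    sqInterp s - sqSecant n s = (⌊s⌋ - n) * (⌊s⌋ - n - 1 + 2 * Int.fract s) := by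
  rw [sqInterp, sqSecant, Int.fract]
  ring

theorem sqInterp_eq_sqSecant_floor (s : ℝ) : sqInterp s = sqSecant ⌊s⌋ s := by
  linarith [sqInterp_sub_sqSecant ⌊s⌋ s]

theorem sqSecant_le_sqInterp (n : ℤ) (s : ℝ) : sqSecant n s ≤ sqInterp s := by
  have h0 := Int.fract_nonneg s
  have h1 := Int.fract_lt_one s
  rw [← sub_nonneg, sqInterp_sub_sqSecant]
  -- an integer `m` and `m - 1 + 2{s}` never have strictly opposite signs, as `0 ≤ {s} < 1`
  rcases lt_trichotomy ⌊s⌋ n with hlt | rfl | hgt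
  · have : (⌊s⌋ : ℝ) + 1 ≤ n := by exact_mod_cast hlt
    nlinarith
  · simp
  · have : (n : ℝ) + 1 ≤ ⌊s⌋ := by exact_mod_cast hgt
    nlinarith

theorem convexOn_sqInterp : ConvexOn ℝ univ sqInterp :=
  convexOn_of_forall_supporting_line convex_univ fun z _ =>
    ⟨2 * ⌊z⌋ + 1, -(⌊z⌋ * (⌊z⌋ + 1)), fun x _ =>
      (by rw [sqSecant]; ring : _ = sqSecant ⌊z⌋ x).trans_le (sqSecant_le_sqInterp ⌊z⌋ x),
      by rw [sqInterp_eq_sqSecant_floor, sqSecant]; ring⟩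

theorem monotoneOn_sqInterp : MonotoneOn sqInterp (Ici 0) := by
  intro x hx y _ hxy
  have hfloor : (0 : ℝ) ≤ ⌊x⌋ := by exact_mod_cast Int.floor_nonneg.mpr hx
  calc sqInterp x = sqSecant ⌊x⌋ x := sqInterp_eq_sqSecant_floor x
    _ ≤ sqSecant ⌊x⌋ y := by unfold sqSecant; gcongr
    _ ≤ sqInterp y := sqSecant_le_sqInterp _ y

theorem continuous_sqInterp : Continuous sqInterp :=
  (continuous_pow 2).add <|
    (by fun_prop : ContinuousOn (fun x : ℝ => x * (1 - x)) (Icc 0 1)).comp_fract'' (by norm_num)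

theorem Fpen_eq_mul_sqInterp {b : ℝ} (hb : b ≠ 0) :
    Fpen b = fun g => b ^ 2 / (4 * π) * sqInterp (2 * π / b * g) := by
  ext g
  rw [Fpen, sqInterp]
  field_simp
  ring

/-- For `b > 0`, `g ↦ F(b,g)` is continuous, convex, and monotone increasing on `[0,∞)`. -/
theorem Fpen_continuous_convex_monotone (b : ℝ) (hb : 0 < b) :
    ContinuousOn (Fpen b) (Ici 0) ∧ ConvexOn ℝ (Ici 0) (Fpen b) ∧
      MonotoneOn (Fpen b) (Ici 0) := by
  rw [Fpen_eq_mul_sqInterp hb.ne']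
  have hc : 0 ≤ b ^ 2 / (4 * π) := by positivity
  have hk : 0 ≤ 2 * π / b := by positivity
  refine ⟨(continuous_const.mul (continuous_sqInterp.comp (continuous_const_mul _))).continuousOn,
    ?_, ?_⟩
  · exact ((convexOn_sqInterp.comp_linearMap ((2 * π / b) • LinearMap.id)).smul hc).subset
      (subset_univ _) (convex_Ici 0)
  · intro x hx y hy hxy
    exact mul_le_mul_of_nonneg_left (monotoneOn_sqInterp (mul_nonneg hk hx) (mul_nonneg hk hy)
      (mul_le_mul_of_nonneg_left hxy hk)) hc
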